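/- For x ∈ [0,π], μ, ε ∈ {±1}, define R_x = √(25/16 + √2·cos x) and the sequence f(2n) = (1 + ε/4 − εμR_x)sin(nx) + (1/√2)sin((n+1)x), f(2n+1) = (μR_x + 1/4 − ε)sin((n+1)x) − (ε/√2)sin(nx) for n ≥ 0, extended by f(−m−1) = ε f(m). Then f satisfies the eigenvalue equations pointwise: for even m ≥ 0, f(m) − (1/2)f(m−1) − (1/(2√2))f(m+1) = λ f(m), and for odd m ≥ 0, (3/4)f(m) − (1/(2√2))f(m−1) − (1/2)f(m+1) = λ f(m), where λ = 7/8 − (μ/2)R_x. -/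

import Mathlib

/-- `R_x = √(25/16 + √2 cos x)`. -/
noncomputable def Rx (x : ℝ) : ℝ := Real.sqrt (25/16 + Real.sqrt 2 * Real.cos x)

open Classical in
/-- The generalized eigenfunction on nonnegative arguments:
`f(2n) = (1+ε/4-εμR)sin(nx) + (1/√2)sin((n+1)x)`,
`f(2n+1) = (μR+1/4-ε)sin((n+1)x) - (ε/√2)sin(nx)`. -/
noncomputable def genEigBase (x μ ε : ℝ) (m : ℤ) : ℝ :=
  if Even m then
    (1 + ε/4 - ε * μ * Rx x) * Real.sin (((m / 2 : ℤ) : ℝ) * x)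
      + (1 / Real.sqrt 2) * Real.sin ((((m / 2 + 1 : ℤ)) : ℝ) * x)
  else
    (μ * Rx x + 1/4 - ε) * Real.sin ((((m - 1) / 2 + 1 : ℤ) : ℝ) * x)
      - (ε / Real.sqrt 2) * Real.sin ((((m - 1) / 2 : ℤ) : ℝ) * x)

open Classical in
/-- The generalized eigenfunction, extended by `f(-m-1) = ε f(m)`. -/
noncomputable def genEig (x μ ε : ℝ) (m : ℤ) : ℝ :=
  if 0 ≤ m then genEigBase x μ ε m else ε * genEigBase x μ ε (-m - 1)

/-!
Writing `a = sin(nx)`, `b = sin((n+1)x)`, the values `f(2n)` and `f(2n+1)` are linear in `(a, b)`,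
and the neighbours `sin((n-1)x)`, `sin((n+2)x)` are eliminated by the three-term recurrence
`sin((ν-1)x) + sin((ν+1)x) = 2 cos x · sin(νx)`. Each eigenvalue equation then becomes a
polynomial identity in `a, b, ε, μ, R_x, √2, cos x` modulo `μ² = 1`, `√2² = 2` and
`√2 cos x = R_x² - 25/16`. The reflection `f(-m-1) = ε f(m)` is exactly what makes the formula
for `f(2n-1)` remain valid at `n = 0`, which is the sewing condition at `m = 0`.
-/

lemma sin_sub_one_mul_add_sin_add_one_mul (x ν : ℝ) :
    Real.sin ((ν - 1) * x) + Real.sin ((ν + 1) * x) = 2 * Real.cos x * Real.sin (ν * x) := by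
  rw [sub_mul, add_mul, one_mul, Real.sin_sub, Real.sin_add]
  ring

lemma sqrt_two_mul_cos_eq_Rx_sq (x : ℝ) : Real.sqrt 2 * Real.cos x = Rx x ^ 2 - 25/16 := by
  have hsqrt2 : Real.sqrt 2 ≤ 3/2 := by
    rw [Real.sqrt_le_left (by norm_num)]; norm_num
  have hcos : -Real.sqrt 2 ≤ Real.sqrt 2 * Real.cos x := by
    nlinarith [Real.neg_one_le_cos x, Real.sqrt_nonneg 2]
  rw [Rx, Real.sq_sqrt (by linarith)]
  ring

lemma even_row_identity {R s t a b c ε μ : ℝ} (hs : s ^ 2 = 2) (hs0 : s ≠ 0)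
    (hst : s * t = R ^ 2 - 25/16) (hμ : μ ^ 2 = 1) (hc : c + b = 2 * t * a) :
    ((1 + ε/4 - ε*μ*R) * a + (1/s) * b) - (1/2) * ((μ*R + 1/4 - ε) * a - (ε/s) * c)
      - (1/(2*s)) * ((μ*R + 1/4 - ε) * b - (ε/s) * a)
    = (7/8 - μ/2*R) * ((1 + ε/4 - ε*μ*R) * a + (1/s) * b) := by
  obtain rfl : c = 2 * t * a - b := by linarith
  field_simp
  linear_combination (-32*ε*a*s^2*R^2) * hμ + (64*ε*a) * hst + (34*ε*a - 32*ε*a*R^2) * hs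

lemma odd_row_identity {R s t a b d ε μ : ℝ} (hs : s ^ 2 = 2) (hs0 : s ≠ 0)
    (hst : s * t = R ^ 2 - 25/16) (hμ : μ ^ 2 = 1) (hd : a + d = 2 * t * b) :
    (3/4) * ((μ*R + 1/4 - ε) * b - (ε/s) * a)
      - (1/(2*s)) * ((1 + ε/4 - ε*μ*R) * a + (1/s) * b)
      - (1/2) * ((1 + ε/4 - ε*μ*R) * b + (1/s) * d)
    = (7/8 - μ/2*R) * ((μ*R + 1/4 - ε) * b - (ε/s) * a) := by
  obtain rfl : d = 2 * t * b - a := by linarith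
  field_simp
  linear_combination (128*b*s^2*R^2) * hμ + (-256*b) * hst + (128*b*R^2 - 136*b) * hs

section

variable (x μ ε : ℝ)

lemma genEigBase_two_mul (n : ℤ) :
    genEigBase x μ ε (2 * n) =
      (1 + ε/4 - ε*μ*Rx x) * Real.sin (n * x) + (1 / Real.sqrt 2) * Real.sin ((n + 1) * x) := by
  rw [genEigBase, if_pos (even_two_mul n), Int.mul_ediv_cancel_left n two_ne_zero]
  push_cast; rfl

lemma genEigBase_two_mul_add_one (n : ℤ) :
    genEigBase x μ ε (2 * n + 1) =
      (μ * Rx x + 1/4 - ε) * Real.sin ((n + 1) * x) - (ε / Real.sqrt 2) * Real.sin (n * x) := by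
  rw [genEigBase, if_neg (Int.not_even_iff_odd.mpr (odd_two_mul_add_one n)),
    show (2 * n + 1 - 1) / 2 = n by omega]
  push_cast; rfl

lemma genEig_of_nonneg {m : ℤ} (hm : 0 ≤ m) : genEig x μ ε m = genEigBase x μ ε m :=
  if_pos hm

lemma genEig_two_mul_sub_one {n : ℤ} (hn : 0 ≤ n) :
    genEig x μ ε (2 * n - 1) =
      (μ * Rx x + 1/4 - ε) * Real.sin (n * x) - (ε / Real.sqrt 2) * Real.sin ((n - 1) * x) := by
  rcases hn.eq_or_lt with rfl | hn
  · rw [genEig, if_neg (by norm_num), show -(2 * 0 - 1) - 1 = 2 * (0 : ℤ) by norm_num,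
      genEigBase_two_mul]
    simp only [Int.cast_zero, zero_mul, zero_add, one_mul, zero_sub, neg_mul, Real.sin_zero,
      Real.sin_neg]
    ring
  · rw [show 2 * n - 1 = 2 * (n - 1) + 1 by ring, genEig_of_nonneg _ _ _ (by omega),
      genEigBase_two_mul_add_one]
    push_cast; ring_nf

variable {μ}

lemma genEig_eigen_equation_even (hμ : μ ^ 2 = 1) {n : ℤ} (hn : 0 ≤ n) :
    genEig x μ ε (2 * n) - (1/2) * genEig x μ ε (2 * n - 1)
        - (1 / (2 * Real.sqrt 2)) * genEig x μ ε (2 * n + 1)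
      = (7/8 - μ / 2 * Rx x) * genEig x μ ε (2 * n) := by
  rw [genEig_two_mul_sub_one _ _ _ hn, genEig_of_nonneg _ _ _ (by omega : 0 ≤ 2 * n),
    genEig_of_nonneg _ _ _ (by omega : 0 ≤ 2 * n + 1), genEigBase_two_mul,
    genEigBase_two_mul_add_one]
  exact even_row_identity (Real.sq_sqrt zero_le_two) (by positivity)
    (sqrt_two_mul_cos_eq_Rx_sq x) hμ (sin_sub_one_mul_add_sin_add_one_mul x n)

lemma genEig_eigen_equation_odd (hμ : μ ^ 2 = 1) {n : ℤ} (hn : 0 ≤ n) :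
    (3/4) * genEig x μ ε (2 * n + 1) - (1 / (2 * Real.sqrt 2)) * genEig x μ ε (2 * n + 1 - 1)
        - (1/2) * genEig x μ ε (2 * n + 1 + 1)
      = (7/8 - μ / 2 * Rx x) * genEig x μ ε (2 * n + 1) := by
  rw [add_sub_cancel_right, show 2 * n + 1 + 1 = 2 * (n + 1) by ring,
    genEig_of_nonneg _ _ _ (by omega : 0 ≤ 2 * n),
    genEig_of_nonneg _ _ _ (by omega : 0 ≤ 2 * n + 1),
    genEig_of_nonneg _ _ _ (by omega : 0 ≤ 2 * (n + 1)), genEigBase_two_mul, genEigBase_two_mul,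
    genEigBase_two_mul_add_one]
  push_cast
  have hrec := sin_sub_one_mul_add_sin_add_one_mul x ((n : ℝ) + 1)
  rw [add_sub_cancel_right] at hrec
  exact odd_row_identity (Real.sq_sqrt zero_le_two) (by positivity) (sqrt_two_mul_cos_eq_Rx_sq x)
    hμ hrec

end

theorem generalized_eigenfunctions_general (x μ ε : ℝ)
    (hμ : μ = 1 ∨ μ = -1) :
    ∀ m : ℤ, 0 ≤ m →
      (Even m →
        genEig x μ ε m - (1/2) * genEig x μ ε (m - 1)
            - (1 / (2 * Real.sqrt 2)) * genEig x μ ε (m + 1)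
          = (7/8 - μ / 2 * Rx x) * genEig x μ ε m) ∧
      (Odd m →
        (3/4) * genEig x μ ε m - (1 / (2 * Real.sqrt 2)) * genEig x μ ε (m - 1)
            - (1/2) * genEig x μ ε (m + 1)
          = (7/8 - μ / 2 * Rx x) * genEig x μ ε m) := by
  have hμ2 : μ ^ 2 = 1 := by rcases hμ with rfl | rfl <;> norm_num
  intro m hm
  refine ⟨fun ⟨n, hmn⟩ => ?_, fun ⟨n, hmn⟩ => ?_⟩
  · obtain rfl : m = 2 * n := by omega
    exact genEig_eigen_equation_even x ε hμ2 (by omega)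
  · subst hmn
    exact genEig_eigen_equation_odd x ε hμ2 (by omega)

theorem generalized_eigenfunctions (x μ ε : ℝ)
    (hx : x ∈ Set.Icc 0 Real.pi) (hμ : μ = 1 ∨ μ = -1) (hε : ε = 1 ∨ ε = -1) :
    ∀ m : ℤ, 0 ≤ m →
      (Even m →
        genEig x μ ε m - (1/2) * genEig x μ ε (m - 1)
            - (1 / (2 * Real.sqrt 2)) * genEig x μ ε (m + 1)
          = (7/8 - μ / 2 * Rx x) * genEig x μ ε m) ∧
      (Odd m →
        (3/4) * genEig x μ ε m - (1 / (2 * Real.sqrt 2)) * genEig x μ ε (m - 1)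
            - (1/2) * genEig x μ ε (m + 1)
          = (7/8 - μ / 2 * Rx x) * genEig x μ ε m) :=
  generalized_eigenfunctions_general x μ ε hμ
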